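/- arXiv:2303.03778 — 5 statements merged into one kernel-verified Lean document; each statement's English description precedes it below -/
import Mathlib

section
/- Let G be an abelian group and p a prime. If the p-torsion subgroup Tor_p(G) is bounded (i.e., p^n · Tor_p(G) = 0 for some n) and the quotient G / Tor_p(G) is not p-divisible, then G is not co-Hopfian. -/
section Aux

variable {G : Type*} [AddCommGroup G]

private lemma nsmul_mem' (N : Submodule ℤ G) (m : ℕ) {x : G} (hx : x ∈ N) : m • x ∈ N := by
  rw [← natCast_zsmul]
  exact N.smul_mem _ hx

private lemma aux_compl (p : ℕ) (hp : p.Prime) (n : ℕ) :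
    ∀ (A B : Submodule ℤ G), B ≤ A →
      (∀ (k : ℕ) (x : G), x ∈ B → (∃ a ∈ A, p ^ k • a = x) → ∃ b ∈ B, p ^ k • b = x) →
      (∀ x ∈ B, p ^ n • x = 0) →
      ∃ H : Submodule ℤ G, H ≤ A ∧ B ⊓ H = ⊥ ∧ B ⊔ H = A := by
  induction n with
  | zero =>
    intro A B hBA hpure hbd
    refine ⟨A, le_rfl, ?_, sup_eq_right.mpr hBA⟩
    rw [eq_bot_iff]
    intro x hx
    have := hbd x (Submodule.mem_inf.mp hx).1
    simpa using this
  | succ n ih =>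
    intro A B hBA hpure hbd
    set lp : G →ₗ[ℤ] G := (p : ℤ) • LinearMap.id with hlp
    have lp_apply : ∀ x : G, lp x = p • x := by
      intro x; simp [hlp, natCast_zsmul]
    set pA := A.map lp with hpA
    set pB := B.map lp with hpB
    have hmem_pA : ∀ x, x ∈ pA ↔ ∃ a ∈ A, p • a = x := by
      intro x
      simp only [hpA, Submodule.mem_map]
      constructor
      · rintro ⟨a, ha, rfl⟩; exact ⟨a, ha, (lp_apply a).symm⟩
      · rintro ⟨a, ha, h⟩; exact ⟨a, ha, by rw [lp_apply]; exact h⟩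
    have hmem_pB : ∀ x, x ∈ pB ↔ ∃ b ∈ B, p • b = x := by
      intro x
      simp only [hpB, Submodule.mem_map]
      constructor
      · rintro ⟨a, ha, rfl⟩; exact ⟨a, ha, (lp_apply a).symm⟩
      · rintro ⟨a, ha, h⟩; exact ⟨a, ha, by rw [lp_apply]; exact h⟩
    have hpBA : pB ≤ pA := Submodule.map_mono hBA
    have hpure' : ∀ (k : ℕ) (x : G), x ∈ pB → (∃ a ∈ pA, p ^ k • a = x) →
        ∃ b ∈ pB, p ^ k • b = x := by
      rintro k x hx ⟨a, ha, hax⟩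
      obtain ⟨a0, ha0, ha0a⟩ := (hmem_pA a).mp ha
      obtain ⟨b0, hb0, hb0x⟩ := (hmem_pB x).mp hx
      have hxB : x ∈ B := hb0x ▸ nsmul_mem' B p hb0
      have hx1 : ∃ b ∈ B, p ^ (k + 1) • b = x := by
        refine hpure (k + 1) x hxB ⟨a0, ha0, ?_⟩
        rw [pow_succ, mul_smul, ha0a, hax]
      obtain ⟨b, hb, hbx⟩ := hx1
      refine ⟨p • b, (hmem_pB _).mpr ⟨b, hb, rfl⟩, ?_⟩
      rw [smul_smul, ← pow_succ, hbx]
    have hbd' : ∀ x ∈ pB, p ^ n • x = 0 := by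
      intro x hx
      obtain ⟨b, hb, rfl⟩ := (hmem_pB x).mp hx
      rw [smul_smul, ← pow_succ, hbd b hb]
    obtain ⟨K, hKpA, hKinf, hKsup⟩ := ih pA pB hpBA hpure' hbd'
    set A₁ := A ⊓ K.comap lp with hA₁
    have hmem_A₁ : ∀ x, x ∈ A₁ ↔ x ∈ A ∧ p • x ∈ K := by
      intro x
      simp only [hA₁, Submodule.mem_inf, Submodule.mem_comap, lp_apply]
    set Bp := B ⊓ LinearMap.ker lp with hBp
    have hmem_Bp : ∀ x, x ∈ Bp ↔ x ∈ B ∧ p • x = 0 := by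
      intro x
      simp only [hBp, Submodule.mem_inf, LinearMap.mem_ker, lp_apply]
    set pA₁ := A₁.map lp with hpA₁
    have hmem_pA₁ : ∀ x, x ∈ pA₁ ↔ ∃ a ∈ A₁, p • a = x := by
      intro x
      simp only [hpA₁, Submodule.mem_map]
      constructor
      · rintro ⟨a, ha, rfl⟩; exact ⟨a, ha, (lp_apply a).symm⟩
      · rintro ⟨a, ha, h⟩; exact ⟨a, ha, by rw [lp_apply]; exact h⟩
    have hA₁A : A₁ ≤ A := inf_le_left
    have hpA₁A₁ : pA₁ ≤ A₁ := by
      intro x hx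
      obtain ⟨a, ha, rfl⟩ := (hmem_pA₁ x).mp hx
      have ha' := (hmem_A₁ a).mp ha
      exact (hmem_A₁ _).mpr ⟨nsmul_mem' A p ha'.1, nsmul_mem' K p ha'.2⟩
    have hBpA₁ : Bp ≤ A₁ := by
      intro x hx
      obtain ⟨hxB, hxp⟩ := (hmem_Bp x).mp hx
      exact (hmem_A₁ x).mpr ⟨hBA hxB, by rw [hxp]; exact K.zero_mem⟩
    -- p·A₁ meets Bp trivially
    have hdisj0 : Bp ⊓ pA₁ = ⊥ := by
      rw [eq_bot_iff]
      intro x hx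
      obtain ⟨hx1, hx2⟩ := Submodule.mem_inf.mp hx
      obtain ⟨a, ha, rfl⟩ := (hmem_pA₁ x).mp hx2
      have haA₁ := (hmem_A₁ a).mp ha
      have hxB : p • a ∈ B := ((hmem_Bp _).mp hx1).1
      have hxpB : p • a ∈ pB := by
        obtain ⟨b, hb, hbx⟩ := hpure 1 (p • a) hxB ⟨a, haA₁.1, by rw [pow_one]⟩
        rw [pow_one] at hbx
        exact (hmem_pB _).mpr ⟨b, hb, hbx⟩
      have : p • a ∈ pB ⊓ K := Submodule.mem_inf.mpr ⟨hxpB, haA₁.2⟩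
      rw [hKinf] at this
      simpa using this
    -- Zorn
    set S : Set (Submodule ℤ G) := {H | pA₁ ≤ H ∧ H ≤ A₁ ∧ Bp ⊓ H = ⊥} with hS
    have hpA₁S : pA₁ ∈ S := ⟨le_rfl, hpA₁A₁, by rw [inf_comm] at hdisj0 ⊢; exact hdisj0⟩
    obtain ⟨H, -, hHS, hHmax⟩ : ∃ H, pA₁ ≤ H ∧ Maximal (· ∈ S) H := by
      refine zorn_le_nonempty₀ S ?_ pA₁ hpA₁S
      intro c hcS hchain y hy
      refine ⟨sSup c, ⟨?_, ?_, ?_⟩, fun z hz => le_sSup hz⟩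
      · exact le_trans (hcS hy).1 (le_sSup hy)
      · exact sSup_le fun z hz => (hcS hz).2.1
      · rw [eq_bot_iff]
        intro x hx
        obtain ⟨hx1, hx2⟩ := Submodule.mem_inf.mp hx
        rw [Submodule.mem_sSup_of_directed ⟨y, hy⟩ (hchain.directedOn)] at hx2
        obtain ⟨z, hzc, hxz⟩ := hx2
        have : x ∈ Bp ⊓ z := Submodule.mem_inf.mpr ⟨hx1, hxz⟩
        rw [(hcS hzc).2.2] at this
        exact this
    obtain ⟨hpA₁H, hHA₁, hBpH⟩ := hHS
    -- Bp ⊔ H = A₁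
    have hsup1 : Bp ⊔ H = A₁ := by
      refine le_antisymm (sup_le hBpA₁ hHA₁) ?_
      intro g hg
      by_cases hgH : g ∈ H
      · exact Submodule.mem_sup_right hgH
      have hpgH : p • g ∈ H := hpA₁H ((hmem_pA₁ _).mpr ⟨g, hg, rfl⟩)
      set H' := H ⊔ Submodule.span ℤ {g} with hH'
      have hH'A₁ : H' ≤ A₁ := sup_le hHA₁ (by
        rw [Submodule.span_le, Set.singleton_subset_iff]; exact hg)
      have hH'ne : Bp ⊓ H' ≠ ⊥ := by
        intro hbot
        have hH'S : H' ∈ S := ⟨le_trans hpA₁H le_sup_left, hH'A₁, hbot⟩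
        have : H' ≤ H := hHmax hH'S le_sup_left
        exact hgH (this (Submodule.mem_sup_right (Submodule.mem_span_singleton_self g)))
      obtain ⟨x, hx, hx0⟩ := (Submodule.ne_bot_iff _).mp hH'ne
      obtain ⟨hxBp, hxH'⟩ := Submodule.mem_inf.mp hx
      obtain ⟨h, hh, y, hy, hhy⟩ := Submodule.mem_sup.mp hxH'
      obtain ⟨m, rfl⟩ := Submodule.mem_span_singleton.mp hy
      have hpgH' : (p : ℤ) • g ∈ H := by rw [natCast_zsmul]; exact hpgH
      by_cases hpm : (p : ℤ) ∣ m
      · exfalso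
        obtain ⟨c, rfl⟩ := hpm
        have hmgH : ((p : ℤ) * c) • g ∈ H := by
          rw [mul_comm, mul_smul]
          exact H.smul_mem c hpgH'
        have hxH : x ∈ H := by
          rw [← hhy]
          exact H.add_mem hh hmgH
        have : x ∈ Bp ⊓ H := Submodule.mem_inf.mpr ⟨hxBp, hxH⟩
        rw [hBpH] at this
        exact hx0 (by simpa using this)
      · -- p coprime to m
        have hp' : Prime (p : ℤ) := Nat.prime_iff_prime_int.mp hp
        have hcop : IsCoprime (p : ℤ) m := hp'.coprime_iff_not_dvd.mpr hpm
        obtain ⟨u, v, huv⟩ := hcop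
        -- g = (u*p + v*m) • g
        have hgodd : g = u • ((p : ℤ) • g) + v • (m • g) := by
          rw [smul_smul, smul_smul, ← add_smul, huv, one_smul]
        have hmg : m • g = x - h := by rw [← hhy]; abel
        have key : v • x + (u • ((p : ℤ) • g) - v • h) = g := by
          calc v • x + (u • ((p : ℤ) • g) - v • h)
              = u • ((p : ℤ) • g) + v • (x - h) := by rw [smul_sub]; abel
            _ = u • ((p : ℤ) • g) + v • (m • g) := by rw [hmg]
            _ = g := hgodd.symm
        rw [← key]
        refine Submodule.add_mem _ (Submodule.mem_sup_left (Bp.smul_mem v hxBp)) ?_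
        exact Submodule.mem_sup_right (H.sub_mem (H.smul_mem u hpgH') (H.smul_mem v hh))
    -- final complement
    refine ⟨H, le_trans hHA₁ hA₁A, ?_, ?_⟩
    · rw [eq_bot_iff]
      intro x hx
      obtain ⟨hxB, hxH⟩ := Submodule.mem_inf.mp hx
      have hxA₁ := hHA₁ hxH
      have hpxK : p • x ∈ K := ((hmem_A₁ x).mp hxA₁).2
      have hpxpB : p • x ∈ pB := (hmem_pB _).mpr ⟨x, hxB, rfl⟩
      have : p • x ∈ pB ⊓ K := Submodule.mem_inf.mpr ⟨hpxpB, hpxK⟩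
      rw [hKinf] at this
      have hx0 : p • x = 0 := by simpa using this
      have hxBp : x ∈ Bp := (hmem_Bp x).mpr ⟨hxB, hx0⟩
      have : x ∈ Bp ⊓ H := Submodule.mem_inf.mpr ⟨hxBp, hxH⟩
      rw [hBpH] at this
      exact this
    · refine le_antisymm (sup_le hBA (le_trans hHA₁ hA₁A)) ?_
      intro a ha
      have hpa : p • a ∈ pA := (hmem_pA _).mpr ⟨a, ha, rfl⟩
      rw [← hKsup] at hpa
      obtain ⟨x, hxpB, y, hyK, hxy⟩ := Submodule.mem_sup.mp hpa
      obtain ⟨b, hbB, rfl⟩ := (hmem_pB x).mp hxpB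
      have habA₁ : a - b ∈ A₁ := by
        refine (hmem_A₁ _).mpr ⟨A.sub_mem ha (hBA hbB), ?_⟩
        have : p • (a - b) = y := by rw [smul_sub, ← hxy]; abel
        rw [this]; exact hyK
      rw [← hsup1] at habA₁
      have hmem : a - b ∈ B ⊔ H := sup_le_sup_right (inf_le_left : Bp ≤ B) H habA₁
      have : a = b + (a - b) := by abel
      rw [this]
      exact Submodule.add_mem _ (Submodule.mem_sup_left hbB) hmem

end Aux

theorem bounded_torsion_not_divisible_quotient_not_coHopfian
    {G : Type*} [AddCommGroup G] (p : ℕ) (hp : p.Prime)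
    (hbd : ∃ n : ℕ, ∀ g : G, (∃ k : ℕ, p ^ k • g = 0) → p ^ n • g = 0)
    (hnotdiv : ¬ ∀ a : G, ∃ b t : G, (∃ k : ℕ, p ^ k • t = 0) ∧ p • b = a + t) :
    ¬ (∀ f : G →+ G, Function.Injective f → Function.Surjective f) := by
  intro hco
  obtain ⟨n, hbd⟩ := hbd
  push_neg at hnotdiv
  obtain ⟨a, ha⟩ := hnotdiv
  -- the p-torsion submodule
  let T : Submodule ℤ G :=
    { carrier := {g | ∃ k : ℕ, p ^ k • g = 0}
      add_mem' := by
        rintro x y ⟨k, hk⟩ ⟨l, hl⟩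
        refine ⟨k + l, ?_⟩
        have hx : p ^ (k + l) • x = 0 := by
          rw [add_comm k l, pow_add, mul_smul, hk, smul_zero]
        have hy : p ^ (k + l) • y = 0 := by
          rw [pow_add, mul_smul, hl, smul_zero]
        rw [smul_add, hx, hy, add_zero]
      zero_mem' := ⟨0, by simp⟩
      smul_mem' := by
        rintro c x ⟨k, hk⟩
        refine ⟨k, ?_⟩
        have h2 : ((p : ℤ) ^ k) • x = 0 := by
          rw [← Nat.cast_pow, natCast_zsmul]; exact hk
        calc (p ^ k) • (c • x) = ((p : ℤ) ^ k) • (c • x) := by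
              rw [← Nat.cast_pow, natCast_zsmul]
          _ = c • (((p : ℤ) ^ k) • x) := by rw [smul_smul, smul_smul, mul_comm]
          _ = 0 := by rw [h2, smul_zero] }
  have hmemT : ∀ g : G, g ∈ T ↔ ∃ k : ℕ, p ^ k • g = 0 := fun g => Iff.rfl
  have hpureT : ∀ (k : ℕ) (x : G), x ∈ T → (∃ g ∈ (⊤ : Submodule ℤ G), p ^ k • g = x) →
      ∃ b ∈ T, p ^ k • b = x := by
    rintro k x ⟨l, hl⟩ ⟨g, -, hg⟩
    refine ⟨g, ⟨l + k, ?_⟩, hg⟩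
    rw [pow_add, mul_smul, hg, hl]
  have hbdT : ∀ x ∈ T, p ^ n • x = 0 := fun x hx => hbd x hx
  obtain ⟨H, -, hinf, hsup⟩ := aux_compl p hp n ⊤ T le_top hpureT hbdT
  have hcompl : IsCompl T H := ⟨disjoint_iff.mpr hinf, codisjoint_iff.mpr hsup⟩
  set r := Submodule.projectionOnto T H hcompl with hr
  set s : G →ₗ[ℤ] G := T.subtype.comp r with hs
  have hsT : ∀ g : G, s g ∈ T := fun g => (r g).2
  have hsid : ∀ g ∈ T, s g = g := by
    intro g hg
    have := Submodule.projectionOnto_apply_left hcompl ⟨g, hg⟩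
    simp only [hs, LinearMap.comp_apply, Submodule.subtype_apply]
    exact congrArg Subtype.val this
  have hs_nsmul : ∀ (m : ℕ) (x : G), s (m • x) = m • s x := by
    intro m x
    rw [← natCast_zsmul, map_smul, natCast_zsmul]
  -- the endomorphism
  let f : G →+ G :=
    { toFun := fun g => s g + p • (g - s g)
      map_zero' := by simp
      map_add' := by
        intro x y
        simp only [map_add, smul_add, add_sub_add_comm, smul_add]
        abel }
  have hf : ∀ g : G, f g = s g + p • (g - s g) := fun g => rfl
  have hinj : Function.Injective f := by
    rw [injective_iff_map_eq_zero]
    intro g hg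
    rw [hf] at hg
    have hsg : s g = 0 := by
      have := congrArg s hg
      rw [map_add, hs_nsmul, map_sub, map_zero] at this
      rw [hsid (s g) (hsT g), sub_self, smul_zero, add_zero] at this
      exact this
    rw [hsg, zero_add, sub_zero] at hg
    have hgT : g ∈ T := ⟨1, by rw [pow_one]; exact hg⟩
    rw [← hsid g hgT, hsg]
  obtain ⟨g, hg⟩ := hco f hinj a
  rw [hf] at hg
  refine ha (g - s g) (-(s g)) ?_ ?_
  · obtain ⟨k, hk⟩ := hsT g
    exact ⟨k, by rw [smul_neg, hk, neg_zero]⟩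
  · rw [← hg]; abel
end

section
/- Let G be an abelian group, p a prime, and suppose Tor_p(G) = K_p is finite and for every a ∈ G there exists c ∈ K_p such that a − c is divisible by p^n in G for all n. Then for each a ∈ G such an element c is unique. -/
theorem unique_torsion_approximation
    {G : Type*} [AddCommGroup G] (p : ℕ) (hp : p.Prime)
    (hfin : {g : G | ∃ n : ℕ, p ^ n • g = 0}.Finite)
    (hex : ∀ a : G, ∃ c : G, (∃ n : ℕ, p ^ n • c = 0) ∧
      ∀ n : ℕ, ∃ d : G, p ^ n • d = a - c)
    (a c₁ c₂ : G)
    (h₁ : (∃ n : ℕ, p ^ n • c₁ = 0) ∧ ∀ n : ℕ, ∃ d : G, p ^ n • d = a - c₁)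
    (h₂ : (∃ n : ℕ, p ^ n • c₂ = 0) ∧ ∀ n : ℕ, ∃ d : G, p ^ n • d = a - c₂) :
    c₁ = c₂ := by
  classical
  set S := {g : G | ∃ n : ℕ, p ^ n • g = 0} with hS
  set f : G → ℕ := fun g => if h : g ∈ S then Nat.find h else 0 with hf
  set N : ℕ := hfin.toFinset.sup f with hN
  have hkill : ∀ g ∈ S, p ^ N • g = 0 := by
    intro g hg
    have hgf : g ∈ hfin.toFinset := hfin.mem_toFinset.mpr hg
    have hle : f g ≤ N := Finset.le_sup hgf
    have hfg : f g = Nat.find hg := by simp [hf, hg]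
    have hspec : p ^ (f g) • g = 0 := by rw [hfg]; exact Nat.find_spec hg
    calc p ^ N • g = p ^ (N - f g) • (p ^ (f g) • g) := by
            rw [smul_smul, ← pow_add, Nat.sub_add_cancel hle]
      _ = 0 := by rw [hspec, smul_zero]
  obtain ⟨⟨m₁, hm₁⟩, hd₁⟩ := h₁
  obtain ⟨⟨m₂, hm₂⟩, hd₂⟩ := h₂
  obtain ⟨d₁, hdd₁⟩ := hd₁ N
  obtain ⟨d₂, hdd₂⟩ := hd₂ N
  have hx : p ^ N • (d₂ - d₁) = c₁ - c₂ := by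
    rw [smul_sub, hdd₁, hdd₂]; abel
  have hxtor : p ^ (m₁ + m₂) • (c₁ - c₂) = 0 := by
    have a1 : p ^ (m₁ + m₂) • c₁ = 0 := by rw [add_comm, pow_add, mul_smul, hm₁, smul_zero]
    have a2 : p ^ (m₁ + m₂) • c₂ = 0 := by rw [pow_add, mul_smul, hm₂, smul_zero]
    rw [smul_sub, a1, a2, sub_zero]
  have hdS : d₂ - d₁ ∈ S := by
    refine ⟨N + (m₁ + m₂), ?_⟩
    rw [pow_add, mul_comm, mul_smul, hx, hxtor]
  have h0 := hkill _ hdS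
  rw [h0] at hx
  exact (sub_eq_zero.mp hx.symm)
end

section
/- Let H be a nilpotent group of class 2 and x, y ∈ H such that [x,y] ≠ e and [x,y]^p = e for a prime p. If π is an injective endomorphism of H and m > 1 is an integer divisible by p such that π(h) ∈ h^m · Z(H) for all h ∈ H, then a contradiction follows; i.e., no such π exists. -/
/-- Multiplying by central elements does not change the commutator. -/
lemma comm_central_aux {G : Type*} [Group G] (a b c d : G)
    (hc : ∀ g : G, c * g = g * c) (hd : ∀ g : G, d * g = g * d) :
    (a * c)⁻¹ * (b * d)⁻¹ * (a * c) * (b * d) = a⁻¹ * b⁻¹ * a * b := by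
  have hcomm : ∀ g : G, Commute c g := fun g => hc g
  have hdcomm : ∀ g : G, Commute d g := fun g => hd g
  have hcinv : ∀ g : G, c⁻¹ * g = g * c⁻¹ := fun g => (hcomm g).inv_left.eq
  have hdinv : ∀ g : G, d⁻¹ * g = g * d⁻¹ := fun g => (hdcomm g).inv_left.eq
  calc (a * c)⁻¹ * (b * d)⁻¹ * (a * c) * (b * d)
      = c⁻¹ * (a⁻¹ * (d⁻¹ * (b⁻¹ * (a * (c * (b * d)))))) := by group
    _ = c⁻¹ * (a⁻¹ * (d⁻¹ * (b⁻¹ * (a * ((b * d) * c))))) := by rw [hc (b * d)]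
    _ = c⁻¹ * ((a⁻¹ * (d⁻¹ * (b⁻¹ * (a * (b * d))))) * c) := by group
    _ = ((a⁻¹ * (d⁻¹ * (b⁻¹ * (a * (b * d))))) * c) * c⁻¹ := by rw [hcinv]
    _ = a⁻¹ * (d⁻¹ * (b⁻¹ * (a * (b * d)))) := by group
    _ = a⁻¹ * (d⁻¹ * ((b⁻¹ * (a * b)) * d)) := by group
    _ = a⁻¹ * (((b⁻¹ * (a * b)) * d) * d⁻¹) := by rw [hdinv]
    _ = a⁻¹ * b⁻¹ * a * b := by group

theorem no_injective_power_endomorphism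
    {H : Type*} [Group H]
    (h2 : ∀ a b : H, a⁻¹ * b⁻¹ * a * b ∈ Subgroup.center H)
    (x y : H) (p : ℕ) (hp : p.Prime)
    (hxy : x⁻¹ * y⁻¹ * x * y ≠ 1)
    (hxyp : (x⁻¹ * y⁻¹ * x * y) ^ p = 1)
    (π : H →* H) (hπinj : Function.Injective π)
    (m : ℤ) (hm : 1 < m) (hpm : (p : ℤ) ∣ m)
    (hπ : ∀ h : H, ∃ c ∈ Subgroup.center H, π h = h ^ m * c) :
    False := by
  set z : H := x⁻¹ * y⁻¹ * x * y with hz_def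
  have hzc : ∀ g : H, z * g = g * z := fun g =>
    ((Subgroup.mem_center_iff.mp (h2 x y)) g).symm
  have hzcomm : ∀ g : H, Commute z g := fun g => hzc g
  -- replace the integer m by a natural number N
  set N : ℕ := m.toNat with hN_def
  have hmN : m = (N : ℤ) := (Int.toNat_of_nonneg (by omega)).symm
  have hpN : p ∣ N := by
    have : (p : ℤ) ∣ (N : ℤ) := hmN ▸ hpm
    exact_mod_cast this
  -- conjugation of x by y^n
  have hxz : y⁻¹ * x * y = x * z := by rw [hz_def]; group
  have conj1 : ∀ n : ℕ, (y ^ n)⁻¹ * x * y ^ n = x * z ^ n := by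
    intro n
    induction n with
    | zero => simp
    | succ n ih =>
      calc (y ^ (n + 1))⁻¹ * x * y ^ (n + 1)
          = y⁻¹ * ((y ^ n)⁻¹ * x * y ^ n) * y := by rw [pow_succ]; group
        _ = y⁻¹ * (x * z ^ n) * y := by rw [ih]
        _ = y⁻¹ * x * (z ^ n * y) := by group
        _ = y⁻¹ * x * (y * z ^ n) := by rw [((hzcomm y).pow_left n).eq]
        _ = (y⁻¹ * x * y) * z ^ n := by group
        _ = (x * z) * z ^ n := by rw [hxz]
        _ = x * z ^ (n + 1) := by rw [pow_succ]; group
  -- conjugation of x^N by y^N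
  have key : (y ^ N)⁻¹ * x ^ N * y ^ N = x ^ N * z ^ (N * N) := by
    have h1 : (y ^ N)⁻¹ * x ^ N * y ^ N = ((y ^ N)⁻¹ * x * y ^ N) ^ N := by
      have := conj_pow (i := N) (a := (y ^ N)⁻¹) (b := x)
      rw [inv_inv] at this
      rw [this]
    rw [h1, conj1]
    rw [((hzcomm x).pow_left N).symm.mul_pow N, ← pow_mul]
  -- z ^ (N * N) = 1
  obtain ⟨k, hk⟩ := hpN
  have hzNN : z ^ (N * N) = 1 := by
    have : N * N = p * (k * (p * k)) := by rw [hk]; ring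
    rw [this, pow_mul, hxyp, one_pow]
  -- compute π z
  obtain ⟨c, hc, hpx⟩ := hπ x
  obtain ⟨d, hd, hpy⟩ := hπ y
  have hcc : ∀ g : H, c * g = g * c := fun g => ((Subgroup.mem_center_iff.mp hc) g).symm
  have hdc : ∀ g : H, d * g = g * d := fun g => ((Subgroup.mem_center_iff.mp hd) g).symm
  have hπz : π z = z ^ (N * N) := by
    have e0 : π z = (π x)⁻¹ * (π y)⁻¹ * π x * π y := by
      rw [hz_def]; simp [map_mul, map_inv, mul_assoc]
    rw [e0, hpx, hpy, hmN, zpow_natCast, zpow_natCast,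
      comm_central_aux (x ^ N) (y ^ N) c d hcc hdc]
    calc (x ^ N)⁻¹ * (y ^ N)⁻¹ * x ^ N * y ^ N
        = (x ^ N)⁻¹ * ((y ^ N)⁻¹ * x ^ N * y ^ N) := by group
      _ = (x ^ N)⁻¹ * (x ^ N * z ^ (N * N)) := by rw [key]
      _ = z ^ (N * N) := by group
  have : π z = π 1 := by rw [hπz, hzNN, map_one]
  exact hxy (hπinj this)
end

section
/- Let G be an abelian group with a direct-sum decomposition G = D ⊕ R where D is the maximal divisible subgroup of G and R is reduced. If G is co-Hopfian and torsion-free, then G = D is divisible of finite rank. -/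
theorem coHopfian_torsionfree_divisible_finite_rank
    {G : Type*} [AddCommGroup G] (D R : AddSubgroup G)
    (hcompl : IsCompl D R)
    (hDdiv : ∀ x ∈ D, ∀ n : ℕ, 0 < n → ∃ y ∈ D, n • y = x)
    (hDmax : ∀ H : AddSubgroup G,
      (∀ x ∈ H, ∀ n : ℕ, 0 < n → ∃ y ∈ H, n • y = x) → H ≤ D)
    (hRred : ∀ H : AddSubgroup G, H ≤ R →
      (∀ x ∈ H, ∀ n : ℕ, 0 < n → ∃ y ∈ H, n • y = x) → H = ⊥)
    (hco : ∀ f : G →+ G, Function.Injective f → Function.Surjective f)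
    (htf : ∀ (n : ℕ) (g : G), n ≠ 0 → n • g = 0 → g = 0) :
    D = ⊤ ∧ (∀ a : G, ∀ n : ℕ, 0 < n → ∃ b : G, n • b = a) ∧
    ∃ n : ℕ, ∀ f : Fin (n + 1) → G, ¬ LinearIndependent ℤ f := by
  classical
  -- integer torsion-freeness
  have htfZ : ∀ (m : ℤ) (g : G), m ≠ 0 → m • g = 0 → g = 0 := by
    intro m g hm hmg
    rcases lt_or_ge 0 m with h0 | h0
    · refine htf m.toNat g (by omega) ?_
      rw [← natCast_zsmul, Int.toNat_of_nonneg h0.le]; exact hmg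
    · refine htf (-m).toNat g (by omega) ?_
      rw [← natCast_zsmul, Int.toNat_of_nonneg (by omega), neg_smul, hmg, neg_zero]
  -- pass to ℤ-submodules
  set D' := AddSubgroup.toIntSubmodule D with hD'def
  set R' := AddSubgroup.toIntSubmodule R with hR'def
  have hcompl' : IsCompl D' R' :=
    (OrderIso.isCompl_iff AddSubgroup.toIntSubmodule).mp hcompl
  have hmemD : ∀ y : G, y ∈ D' ↔ y ∈ D := fun y => Iff.rfl
  have hmemR : ∀ y : G, y ∈ R' ↔ y ∈ R := fun y => Iff.rfl
  set pD := D'.projectionOnto R' hcompl' with hpD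
  set pR := R'.projectionOnto D' hcompl'.symm with hpR
  have hsum : ∀ g : G, ((pD g : G) + (pR g : G)) = g := fun g =>
    Submodule.projection_add_projection_eq_self hcompl' g
  -- R is divisible
  have hRdiv : ∀ x ∈ R, ∀ n : ℕ, 0 < n → ∃ y ∈ R, n • y = x := by
    intro x hx n hn
    let f : G →ₗ[ℤ] G := D'.subtype ∘ₗ pD + (n : ℤ) • (R'.subtype ∘ₗ pR)
    have hfapp : ∀ g : G, f g = (pD g : G) + (n : ℤ) • (pR g : G) := fun g => rfl
    have hker : ∀ g : G, f g = 0 → g = 0 := by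
      intro g hg
      rw [hfapp] at hg
      have h1 : (pD g : G) = -((n : ℤ) • (pR g : G)) := by linear_combination (norm := abel) hg
      have hmem : (pD g : G) ∈ R' := by
        rw [h1]; exact neg_mem (Submodule.smul_mem _ _ (pR g).2)
      have hD0 : (pD g : G) = 0 :=
        (Submodule.disjoint_def.mp hcompl'.disjoint) _ (pD g).2 hmem
      have hR0 : (pR g : G) = 0 := by
        refine htfZ (n : ℤ) _ (by exact_mod_cast hn.ne') ?_
        have := hg
        rw [hD0, zero_add] at this
        exact this
      rw [← hsum g, hD0, hR0, add_zero]
    have hinj : Function.Injective f.toAddMonoidHom := by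
      rw [injective_iff_map_eq_zero]
      exact hker
    obtain ⟨g, hg⟩ := hco f.toAddMonoidHom hinj x
    have hg' : (pD g : G) + (n : ℤ) • (pR g : G) = x := by
      rw [← hfapp]; exact hg
    have hmem : (pD g : G) ∈ R' := by
      have : (pD g : G) = x - (n : ℤ) • (pR g : G) := by
        linear_combination (norm := abel) hg'
      rw [this]
      exact sub_mem ((hmemR x).mpr hx) (Submodule.smul_mem _ _ (pR g).2)
    have hD0 : (pD g : G) = 0 :=
      (Submodule.disjoint_def.mp hcompl'.disjoint) _ (pD g).2 hmem
    refine ⟨(pR g : G), (hmemR _).mp (pR g).2, ?_⟩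
    rw [hD0, zero_add] at hg'
    rw [← natCast_zsmul]
    exact hg'
  have hRbot : R = ⊥ := hRred R le_rfl hRdiv
  have hDtop : D = ⊤ := by
    have h := hcompl.codisjoint
    rw [hRbot] at h
    exact codisjoint_bot.mp h
  -- divisibility of G
  have hdiv : ∀ a : G, ∀ n : ℕ, 0 < n → ∃ b : G, n • b = a := by
    intro a n hn
    obtain ⟨y, _, hy⟩ := hDdiv a (by rw [hDtop]; trivial) n hn
    exact ⟨y, hy⟩
  have hdivZ : ∀ (a : G) (m : ℤ), m ≠ 0 → ∃ b : G, m • b = a := by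
    intro a m hm
    rcases lt_or_ge 0 m with h0 | h0
    · obtain ⟨b, hb⟩ := hdiv a m.toNat (by omega)
      exact ⟨b, by rw [show m = ((m.toNat : ℕ) : ℤ) from (Int.toNat_of_nonneg h0.le).symm,
        natCast_zsmul, hb]⟩
    · obtain ⟨b, hb⟩ := hdiv a (-m).toNat (by omega)
      refine ⟨-b, ?_⟩
      rw [smul_neg, ← neg_smul,
        show -m = (((-m).toNat : ℕ) : ℤ) from (Int.toNat_of_nonneg (by omega)).symm,
        natCast_zsmul, hb]
  refine ⟨hDtop, hdiv, ?_⟩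
  -- finite rank
  by_contra hfin
  push_neg at hfin
  set S := nonZeroDivisors ℤ
  set K := FractionRing ℤ
  set V := LocalizedModule S G
  letI : Module ℤ V := OreLocalization.instModuleOfIsScalarTower
  set ℓ := LocalizedModule.mkLinearMap S G with hℓ
  have hinj : Function.Injective ℓ := by
    rw [injective_iff_map_eq_zero]
    intro g hg
    obtain ⟨s, hs⟩ := (IsLocalizedModule.eq_zero_iff S ℓ).mp hg
    refine htfZ (s : ℤ) g (nonZeroDivisors.coe_ne_zero s) ?_
    simpa [Submonoid.smul_def] using hs
  have hsurj : Function.Surjective ℓ := by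
    intro x
    induction x using LocalizedModule.induction_on with
    | _ m s =>
      obtain ⟨b, hb⟩ := hdivZ m (s : ℤ) (nonZeroDivisors.coe_ne_zero s)
      refine ⟨b, ?_⟩
      rw [show ℓ b = LocalizedModule.mk b 1 from rfl, ← LocalizedModule.mk_cancel s b,
        Submonoid.smul_def]
      exact congrArg (fun z => LocalizedModule.mk z s) hb
  -- infinite dimension over K
  have hnotfin : ¬ Module.Finite K V := by
    intro hVfin
    obtain ⟨v, hv⟩ := hfin (Module.finrank K V)
    have hKv : LinearIndependent K (⇑ℓ ∘ v) := hv.of_isLocalizedModule K S ℓ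
    have := hKv.fintype_card_le_finrank
    rw [Fintype.card_fin] at this
    exact Nat.not_succ_le_self (Module.finrank K V) this
  have hinfinite : Infinite (Module.Basis.ofVectorSpaceIndex K V) := by
    rw [← not_finite_iff_infinite]
    intro hfin'
    exact hnotfin (Module.Finite.of_basis (Module.Basis.ofVectorSpace K V))
  -- build a shift endomorphism
  obtain ⟨eo⟩ : Nonempty (Option (Module.Basis.ofVectorSpaceIndex K V) ≃ (Module.Basis.ofVectorSpaceIndex K V)) := by
    rw [← Cardinal.eq, Cardinal.mk_option]
    exact Cardinal.add_one_eq (Cardinal.aleph0_le_mk _)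
  set b : Module.Basis (Option (Module.Basis.ofVectorSpaceIndex K V)) K V :=
    (Module.Basis.ofVectorSpace K V).reindex eo.symm with hb
  set shift : V →ₗ[K] V :=
    (b.repr.symm.toLinearMap) ∘ₗ (Finsupp.lmapDomain K K (fun o => some (eo o))) ∘ₗ (b.repr.toLinearMap)
    with hshift
  have hshiftapp : ∀ v : V, shift v = b.repr.symm (Finsupp.mapDomain (fun o => some (eo o)) (b.repr v)) :=
    fun v => rfl
  have hshiftinj : Function.Injective shift := by
    intro v w hvw
    rw [hshiftapp, hshiftapp] at hvw
    exact b.repr.injective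
      (Finsupp.mapDomain_injective ((Option.some_injective _).comp eo.injective) (b.repr.symm.injective hvw))
  have hshiftnotsurj : ¬ Function.Surjective shift := by
    intro hs
    obtain ⟨v, hv⟩ := hs (b none)
    have h1 : Finsupp.mapDomain (fun o => some (eo o)) (b.repr v) = Finsupp.single none (1 : K) := by
      have h0 := congrArg b.repr hv
      rw [hshiftapp] at h0
      rwa [LinearEquiv.apply_symm_apply, Module.Basis.repr_self] at h0
    have h2 : none ∈ (Finsupp.mapDomain (fun o => some (eo o)) (b.repr v)).support := by
      rw [h1]
      simp [Finsupp.support_single_ne_zero]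
    have h3 := Finsupp.mapDomain_support h2
    simp only [Finset.mem_image] at h3
    obtain ⟨i, _, hi⟩ := h3
    exact Option.some_ne_none (eo i) hi
  -- transport to G
  let e : G ≃+ V := AddEquiv.ofBijective ℓ.toAddMonoidHom ⟨hinj, hsurj⟩
  let fG : G →+ G := e.symm.toAddMonoidHom.comp (shift.toAddMonoidHom.comp e.toAddMonoidHom)
  have hfGapp : ∀ g : G, fG g = e.symm (shift (e g)) := fun g => rfl
  have hfGinj : Function.Injective fG := by
    intro a c hac
    rw [hfGapp, hfGapp] at hac
    exact e.injective (hshiftinj (e.symm.injective hac))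
  have hfGsurj := hco fG hfGinj
  apply hshiftnotsurj
  intro w
  obtain ⟨g, hg⟩ := hfGsurj (e.symm w)
  refine ⟨e g, ?_⟩
  have := congrArg e (hfGapp g ▸ hg)
  simpa using this
end

section
/- Let G be an abelian group in which every endomorphism is multiplication by some integer (G is endorigid). Then G is Hopfian. -/
/-- Digit sequence: `uSeq p k = ∑_{i < k, i even} p^i`, a "p-adic number with
alternating digits 1,0,1,0,…" truncated at `k`. -/
private def uSeq (p : ℕ) : ℕ → ℕ
  | 0 => 0
  | k + 1 => uSeq p k + (if Even k then p ^ k else 0)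

private lemma uSeq_odd (p t : ℕ) : uSeq p (2 * t + 1) = uSeq p (2 * t) + p ^ (2 * t) := by
  simp [uSeq, even_two_mul]

private lemma uSeq_even (p t : ℕ) : uSeq p (2 * t + 2) = uSeq p (2 * t + 1) := by
  show uSeq p ((2 * t + 1) + 1) = _
  simp [uSeq, Nat.even_add_one, even_two_mul]

private lemma uSeq_dvd (p : ℕ) {j k : ℕ} (h : j ≤ k) :
    (p : ℤ) ^ j ∣ (uSeq p k : ℤ) - uSeq p j := by
  induction k with
  | zero => simp_all
  | succ k ih =>
    rcases Nat.lt_or_ge j (k + 1) with h' | h'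
    · have hjk : j ≤ k := Nat.lt_succ_iff.mp h'
      have : (uSeq p (k+1) : ℤ) - uSeq p j
          = ((uSeq p k : ℤ) - uSeq p j) + ((if Even k then (p:ℤ) ^ k else 0)) := by
        simp [uSeq]; split <;> push_cast <;> ring
      rw [this]
      refine dvd_add (ih hjk) ?_
      split
      · exact pow_dvd_pow _ hjk
      · exact dvd_zero _
    · have : j = k + 1 := le_antisymm h h'
      subst this; simp

private lemma uSeq_val (p : ℕ) : ∀ t : ℕ,
    ((p : ℤ) ^ 2 - 1) * uSeq p (2 * t) = (p : ℤ) ^ (2 * t) - 1 ∧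
    ((p : ℤ) ^ 2 - 1) * uSeq p (2 * t + 1) = (p : ℤ) ^ (2 * t + 2) - 1 := by
  intro t
  induction t with
  | zero => simp [uSeq]
  | succ t ih =>
    obtain ⟨ih1, ih2⟩ := ih
    have e2 : uSeq p (2 * (t + 1)) = uSeq p (2 * t + 1) := by
      rw [show 2 * (t + 1) = 2 * t + 2 by ring]; exact uSeq_even p t
    have e3 : uSeq p (2 * (t + 1) + 1) = uSeq p (2 * (t + 1)) + p ^ (2 * (t + 1)) :=
      uSeq_odd p (t + 1)
    constructor
    · rw [e2, ih2]; ring_nf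
    · rw [e3, e2]
      push_cast
      rw [mul_add, ih2]
      ring

/-- No integer is congruent to `uSeq p k` modulo `p^k` for all `k`. -/
private lemma uSeq_contra {p : ℕ} (hp : 2 ≤ p) (m : ℤ)
    (H : ∀ t : ℕ, (p : ℤ) ^ (2 * t + 2) ∣ (uSeq p (2 * t + 2) : ℤ) - m) : False := by
  have hpz : (2 : ℤ) ≤ p := by exact_mod_cast hp
  have hval : ∀ t, ((p : ℤ) ^ 2 - 1) * uSeq p (2 * t + 2) = (p : ℤ) ^ (2 * t + 2) - 1 := by
    intro t
    have h := (uSeq_val p (t + 1)).1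
    rw [show 2 * (t + 1) = 2 * t + 2 by ring] at h
    exact h
  have hstep : ∀ t, (uSeq p (2 * t + 4) : ℤ) = uSeq p (2 * t + 2) + (p : ℤ) ^ (2 * t + 2) := by
    intro t
    rw [show 2 * t + 4 = 2 * (t + 1) + 2 by ring, uSeq_even, uSeq_odd,
      show 2 * (t + 1) = 2 * t + 2 by ring]
    push_cast; ring
  have hub : ∀ t, 3 * (uSeq p (2 * t + 2) : ℤ) ≤ (p : ℤ) ^ (2 * t + 2) - 1 := by
    intro t
    have h1 := hval t
    have h2 : (0 : ℤ) ≤ uSeq p (2 * t + 2) := Int.natCast_nonneg _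
    have hp2 : (3 : ℤ) ≤ (p : ℤ) ^ 2 - 1 := by nlinarith
    nlinarith [mul_le_mul_of_nonneg_right hp2 h2]
  have hppow : ∀ n : ℕ, (1 : ℤ) ≤ (p : ℤ) ^ n := fun n => one_le_pow₀ (by linarith)
  have hexists : ∀ N : ℤ, ∃ t : ℕ, N < (p : ℤ) ^ (2 * t + 2) := by
    intro N
    refine ⟨N.toNat, ?_⟩
    have h1 : N ≤ N.toNat := Int.self_le_toNat N
    have h2 : (N.toNat : ℤ) < 2 ^ N.toNat := by exact_mod_cast Nat.lt_two_pow_self (n := N.toNat)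
    have h3 : (2 : ℤ) ^ N.toNat ≤ (p : ℤ) ^ (2 * N.toNat + 2) := by
      calc (2 : ℤ) ^ N.toNat ≤ 2 ^ (2 * N.toNat + 2) :=
            pow_le_pow_right₀ one_le_two (by omega)
        _ ≤ (p : ℤ) ^ (2 * N.toNat + 2) := pow_le_pow_left₀ (by norm_num) hpz _
    linarith
  rcases le_or_gt 0 m with hm | hm
  · obtain ⟨t, ht⟩ := hexists m
    have key : ∀ s, t ≤ s → (uSeq p (2 * s + 2) : ℤ) = m := by
      intro s hs
      have hms : m < (p : ℤ) ^ (2 * s + 2) :=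
        lt_of_lt_of_le ht (pow_le_pow_right₀ (by linarith) (by omega))
      have hu : (uSeq p (2 * s + 2) : ℤ) < (p : ℤ) ^ (2 * s + 2) := by
        have := hub s
        have := Int.natCast_nonneg (uSeq p (2 * s + 2))
        linarith
      by_contra hne
      have habs : (p : ℤ) ^ (2 * s + 2) ≤ |(uSeq p (2 * s + 2) : ℤ) - m| :=
        Int.le_of_dvd (abs_pos.mpr (sub_ne_zero.mpr hne)) ((dvd_abs _ _).mpr (H s))
      have : |(uSeq p (2 * s + 2) : ℤ) - m| < (p : ℤ) ^ (2 * s + 2) := by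
        rw [abs_sub_lt_iff]
        constructor
        · have := Int.natCast_nonneg (uSeq p (2 * s + 2)); linarith
        · have := Int.natCast_nonneg (uSeq p (2 * s + 2)); linarith
      linarith
    have k1 := key t le_rfl
    have k2 := key (t + 1) (by omega)
    rw [show 2 * (t + 1) + 2 = 2 * t + 4 by ring] at k2
    rw [hstep t, k1] at k2
    have := hppow (2 * t + 2)
    linarith
  · obtain ⟨t, ht⟩ := hexists (3 * (-m))
    have hpos : 0 < (uSeq p (2 * t + 2) : ℤ) - m := by
      have := Int.natCast_nonneg (uSeq p (2 * t + 2)); linarith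
    have hle := Int.le_of_dvd hpos (H t)
    have := hub t
    linarith

/-- In a `p`-divisible group, `p`-power-torsion elements are divisible by every positive
natural number within the `p`-power-torsion. -/
private lemma aux_div_torsion {G : Type*} [AddCommGroup G] {p : ℕ} (hp : p.Prime)
    (hdiv : ∀ x : G, ∃ y : G, p • y = x) :
    ∀ n : ℕ, 0 < n → ∀ x : G, (∃ k, p ^ k • x = 0) →
      ∃ y : G, (∃ k, p ^ k • y = 0) ∧ n • y = x := by
  intro n
  induction n using Nat.strong_induction_on with
  | _ n ih =>
    intro hn x hx
    rcases eq_or_ne n 1 with rfl | hn1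
    · exact ⟨x, hx, one_smul ℕ x⟩
    · set ℓ := n.minFac with hℓ
      have hℓp : ℓ.Prime := Nat.minFac_prime hn1
      have hℓdvd : ℓ ∣ n := Nat.minFac_dvd n
      set n' := n / ℓ with hn'
      have hnn' : n = ℓ * n' := (Nat.mul_div_cancel' hℓdvd).symm
      have hn'pos : 0 < n' := Nat.div_pos (Nat.minFac_le hn) hℓp.pos
      have hn'lt : n' < n := Nat.div_lt_self hn hℓp.one_lt
      obtain ⟨y', ⟨k, hk⟩, hy'⟩ := ih n' hn'lt hn'pos x hx
      rcases eq_or_ne ℓ p with rfl | hne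
      · obtain ⟨z, hz⟩ := hdiv y'
        refine ⟨z, ⟨k + 1, ?_⟩, ?_⟩
        · rw [pow_succ, mul_smul, hz, hk]
        · rw [hnn', mul_comm, mul_smul, hz, hy']
      · have hcop : Nat.Coprime ℓ (p ^ k) :=
          (Nat.coprime_primes hℓp hp).mpr hne |>.pow_right k
        have hcopZ : IsCoprime (ℓ : ℤ) ((p : ℤ) ^ k) := by
          rw [Int.isCoprime_iff_gcd_eq_one]
          exact_mod_cast hcop
        obtain ⟨u, v, huv⟩ := hcopZ
        refine ⟨u • y', ⟨k, ?_⟩, ?_⟩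
        · rw [← natCast_zsmul, smul_comm, natCast_zsmul, hk, smul_zero]
        · have h1 : ((ℓ : ℤ) * u) • y' = y' := by
            have h2 : ((ℓ : ℤ) * u) • y' = (1 - v * (p : ℤ) ^ k) • y' := by
              congr 1; linarith [huv]
            rw [h2, sub_smul, one_smul, mul_smul]
            rw [← natCast_zsmul y' (p ^ k)] at hk
            push_cast at hk
            rw [hk, smul_zero, sub_zero]
          calc n • (u • y') = (ℓ * n') • (u • y') := by rw [hnn']
            _ = n' • (ℓ • (u • y')) := by rw [mul_comm, mul_smul]
            _ = n' • y' := by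
                rw [← natCast_zsmul (u • y') ℓ, smul_smul, h1]
            _ = x := hy'

theorem endorigid_implies_hopfian
    {G : Type*} [AddCommGroup G]
    (hend : ∀ f : G →+ G, ∃ m : ℤ, ∀ a : G, f a = m • a) :
    ∀ f : G →+ G, Function.Surjective f → Function.Injective f := by
  classical
  intro f hsurj a b hab
  by_contra hne
  obtain ⟨m, hm⟩ := hend f
  set c : G := a - b with hc
  have hc0 : c ≠ 0 := sub_ne_zero.mpr hne
  have hmc : m • c = 0 := by
    rw [hc, smul_sub, ← hm, ← hm, hab, sub_self]
  have hmsurj : ∀ x : G, ∃ y : G, m • y = x := by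
    intro x
    obtain ⟨y, hy⟩ := hsurj x
    exact ⟨y, by rw [← hm, hy]⟩
  have hm0 : m ≠ 0 := by
    rintro rfl
    obtain ⟨y, hy⟩ := hmsurj c
    rw [zero_smul] at hy
    exact hc0 hy.symm
  -- natural-number torsion of c
  set d : ℕ := m.natAbs with hd
  have hd0 : d ≠ 0 := Int.natAbs_ne_zero.mpr hm0
  have hdc : d • c = 0 := by
    have : (d : ℤ) • c = 0 := by
      rcases Int.natAbs_eq m with h | h
      · rw [← h, hmc]
      · have : (d : ℤ) = -m := by omega
        rw [this, neg_smul, hmc, neg_zero]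
    rwa [natCast_zsmul] at this
  set e : ℕ := addOrderOf c with he
  have hedvd : e ∣ d := addOrderOf_dvd_of_nsmul_eq_zero hdc
  have he0 : e ≠ 0 := fun h0 => hd0 (zero_dvd_iff.mp (h0 ▸ hedvd))
  have he1 : e ≠ 1 := fun h => hc0 (AddMonoid.addOrderOf_eq_one_iff.mp h)
  set p : ℕ := e.minFac with hpdef
  have hp : p.Prime := Nat.minFac_prime he1
  have hpe : p ∣ e := Nat.minFac_dvd e
  -- element of order p
  set c' : G := (e / p) • c with hc'def
  have hpc' : p • c' = 0 := by
    rw [hc'def, smul_smul, Nat.mul_div_cancel' hpe]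
    exact addOrderOf_nsmul_eq_zero c
  have hc'0 : c' ≠ 0 := by
    intro h
    have h1 : e ∣ e / p := addOrderOf_dvd_of_nsmul_eq_zero h
    have h2 : 0 < e / p := Nat.div_pos (Nat.minFac_le (Nat.pos_of_ne_zero he0)) hp.pos
    have h3 : e / p < e := Nat.div_lt_self (Nat.pos_of_ne_zero he0) hp.one_lt
    have := Nat.le_of_dvd h2 h1
    omega
  -- G is p-divisible
  have hpm : (p : ℤ) ∣ m := by
    have h1 : (p : ℤ) ∣ (d : ℤ) := Int.natCast_dvd_natCast.mpr (hpe.trans hedvd)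
    exact h1.trans (Int.natAbs_dvd.mpr dvd_rfl)
  have hpdiv : ∀ x : G, ∃ y : G, p • y = x := by
    intro x
    obtain ⟨z, hz⟩ := hmsurj x
    obtain ⟨m', hm'⟩ := hpm
    refine ⟨m' • z, ?_⟩
    rw [← natCast_zsmul, smul_smul, ← hm', hz]
  -- the p-power torsion subgroup
  set T : AddSubgroup G :=
    { carrier := {x : G | ∃ k : ℕ, p ^ k • x = 0}
      zero_mem' := ⟨0, smul_zero _⟩
      add_mem' := by
        rintro x y ⟨k, hk⟩ ⟨l, hl⟩
        refine ⟨k + l, ?_⟩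
        rw [smul_add]
        have h1 : p ^ (k + l) • x = 0 := by
          rw [pow_add, mul_comm, mul_smul, hk, smul_zero]
        have h2 : p ^ (k + l) • y = 0 := by
          rw [pow_add, mul_smul, hl, smul_zero]
        rw [h1, h2, add_zero]
      neg_mem' := by
        rintro x ⟨k, hk⟩
        exact ⟨k, by rw [smul_neg, hk, neg_zero]⟩ } with hTdef
  have hmemT : ∀ x : G, x ∈ T ↔ ∃ k : ℕ, p ^ k • x = 0 := fun x => Iff.rfl
  -- T is a divisible group
  haveI : DivisibleBy T ℤ := by
    refine divisibleByOfSMulRightSurj T ℤ ?_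
    intro n hn x
    obtain ⟨y, hyt, hny⟩ := aux_div_torsion hp hpdiv n.natAbs
      (Int.natAbs_pos.mpr hn) (x : G) x.2
    rcases Int.natAbs_eq n with h | h
    · refine ⟨⟨y, hyt⟩, ?_⟩
      apply Subtype.ext
      show n • y = (x : G)
      rw [h, natCast_zsmul, hny]
    · obtain ⟨k, hk⟩ := hyt
      refine ⟨⟨-y, k, by rw [smul_neg, hk, neg_zero]⟩, ?_⟩
      apply Subtype.ext
      show n • (-y) = (x : G)
      rw [h, neg_smul, smul_neg, neg_neg, natCast_zsmul, hny]
  have hBaer : Module.Baer ℤ T := Module.Baer.of_divisible T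
  obtain ⟨h, hh⟩ := hBaer.extension_property_addMonoidHom T.subtype
    Subtype.coe_injective (AddMonoidHom.id T)
  -- the retraction π : G → T ⊆ G
  obtain ⟨m₁, hm₁⟩ := hend (T.subtype.comp h)
  -- the sequence seq k with p^k • seq k = c'
  choose g hg using hpdiv
  set seq : ℕ → G := fun k => g^[k] c' with hseqdef
  have hseq : ∀ k, p ^ k • seq k = c' := by
    intro k
    induction k with
    | zero => simp [hseqdef]
    | succ k ihk =>
      have : seq (k + 1) = g (seq k) := Function.iterate_succ_apply' g k c'
      rw [this, pow_succ, mul_smul, hg, ihk]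
  have hseq0 : ∀ k, p ^ (k + 1) • seq k = 0 := by
    intro k
    rw [pow_succ', mul_smul, hseq, hpc']
  have hseqT : ∀ k, seq k ∈ T := fun k => ⟨k + 1, hseq0 k⟩
  have hord : ∀ k, addOrderOf (seq k) = p ^ (k + 1) := by
    intro k
    have h1 : addOrderOf (seq k) ∣ p ^ (k + 1) :=
      addOrderOf_dvd_of_nsmul_eq_zero (hseq0 k)
    obtain ⟨j, hj, hjeq⟩ := (Nat.dvd_prime_pow hp).mp h1
    rcases Nat.lt_or_ge j (k + 1) with hlt | hge
    · exfalso
      have h2 : addOrderOf (seq k) ∣ p ^ k := hjeq ▸ pow_dvd_pow p (Nat.lt_succ_iff.mp hlt)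
      have h3 : p ^ k • seq k = 0 := addOrderOf_dvd_iff_nsmul_eq_zero.mp h2
      rw [hseq k] at h3
      exact hc'0 h3
    · rw [hjeq, le_antisymm hj hge]
  -- π fixes each seq k, hence m₁ = 1
  have hfix : ∀ k, m₁ • seq k = seq k := by
    intro k
    have h1 := DFunLike.congr_fun hh (⟨seq k, hseqT k⟩ : T)
    have h2 : (T.subtype.comp h) (seq k) = seq k := by
      simpa using congrArg (Subtype.val) h1
    calc m₁ • seq k = (T.subtype.comp h) (seq k) := (hm₁ _).symm
      _ = seq k := h2
  have hdvd1 : ∀ k : ℕ, (p : ℤ) ^ (k + 1) ∣ (m₁ - 1) := by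
    intro k
    have hz : (m₁ - 1) • seq k = 0 := by
      rw [sub_smul, one_smul, hfix, sub_self]
    have h1 : (addOrderOf (seq k) : ℤ) ∣ (m₁ - 1) :=
      addOrderOf_dvd_iff_zsmul_eq_zero.mpr hz
    rw [hord k] at h1
    exact_mod_cast h1
  have hm₁1 : m₁ = 1 := by
    by_contra hne1
    set N : ℕ := (m₁ - 1).natAbs with hN
    have h1 : (p : ℤ) ^ (N + 1) ≤ |m₁ - 1| :=
      Int.le_of_dvd (abs_pos.mpr (sub_ne_zero.mpr hne1)) ((dvd_abs _ _).mpr (hdvd1 N))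
    have h2 : |m₁ - 1| = (N : ℤ) := (Int.abs_eq_natAbs _).trans rfl
    have h3 : (N : ℤ) < 2 ^ (N + 1) := by
      have := Nat.lt_two_pow_self (n := N)
      have h4 : (2 : ℕ) ^ N ≤ 2 ^ (N + 1) := Nat.pow_le_pow_right (by norm_num) (by omega)
      exact_mod_cast lt_of_lt_of_le this h4
    have h5 : (2 : ℤ) ^ (N + 1) ≤ (p : ℤ) ^ (N + 1) :=
      pow_le_pow_left₀ (by norm_num) (by exact_mod_cast hp.two_le) _
    linarith
  -- every element of G is p-power torsion
  have hTall : ∀ x : G, ∃ k : ℕ, p ^ k • x = 0 := by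
    intro x
    have h1 : ((h x : G)) = x := by
      have := hm₁ x
      rw [hm₁1, one_smul] at this
      exact this
    obtain ⟨k, hk⟩ := (h x).2
    exact ⟨k, by rw [← h1]; exact hk⟩
  -- the p-adic style endomorphism
  have hkey : ∀ (x : G) (k : ℕ), p ^ k • x = 0 →
      (uSeq p k : ℤ) • x = (uSeq p (Nat.find (hTall x)) : ℤ) • x := by
    intro x k hk
    have hle : Nat.find (hTall x) ≤ k := Nat.find_min' (hTall x) hk
    obtain ⟨t, htt⟩ := uSeq_dvd p hle
    have hpx : ((p : ℤ) ^ (Nat.find (hTall x))) • x = 0 := by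
      have h1 := Nat.find_spec (hTall x)
      rw [← natCast_zsmul] at h1
      push_cast at h1
      exact h1
    have h0 : ((uSeq p k : ℤ) - uSeq p (Nat.find (hTall x))) • x = 0 := by
      rw [htt, mul_comm, mul_smul, hpx, smul_zero]
    rw [sub_smul, sub_eq_zero] at h0
    exact h0
  have hkill : ∀ (x : G) (j k : ℕ), j ≤ k → p ^ j • x = 0 → p ^ k • x = 0 := by
    intro x j k hjk hx
    rw [← Nat.sub_add_cancel hjk, pow_add, mul_smul, hx, smul_zero]
  set φ : G →+ G := AddMonoidHom.mk'
    (fun x => (uSeq p (Nat.find (hTall x)) : ℤ) • x) (by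
      intro x y
      set K : ℕ := max (Nat.find (hTall x)) (Nat.find (hTall y)) with hK
      have hx : p ^ K • x = 0 :=
        hkill x _ K (le_max_left _ _) (Nat.find_spec (hTall x))
      have hy : p ^ K • y = 0 :=
        hkill y _ K (le_max_right _ _) (Nat.find_spec (hTall y))
      have hxy : p ^ K • (x + y) = 0 := by rw [smul_add, hx, hy, add_zero]
      show (uSeq p (Nat.find (hTall (x + y))) : ℤ) • (x + y)
          = (uSeq p (Nat.find (hTall x)) : ℤ) • x + (uSeq p (Nat.find (hTall y)) : ℤ) • y
      rw [← hkey (x + y) K hxy, ← hkey x K hx, ← hkey y K hy, smul_add]) with hφdef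
  obtain ⟨m₂, hm₂⟩ := hend φ
  have hdvd2 : ∀ k : ℕ, (p : ℤ) ^ (k + 1) ∣ ((uSeq p (k + 1) : ℤ) - m₂) := by
    intro k
    have h1 : (uSeq p (k + 1) : ℤ) • seq k = m₂ • seq k := by
      rw [hkey (seq k) (k + 1) (hseq0 k)]
      exact hm₂ (seq k)
    have hz : ((uSeq p (k + 1) : ℤ) - m₂) • seq k = 0 := by
      rw [sub_smul, h1, sub_self]
    have h2 : (addOrderOf (seq k) : ℤ) ∣ ((uSeq p (k + 1) : ℤ) - m₂) :=
      addOrderOf_dvd_iff_zsmul_eq_zero.mpr hz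
    rw [hord k] at h2
    exact_mod_cast h2
  exact uSeq_contra hp.two_le m₂ (fun t => by
    have := hdvd2 (2 * t + 1)
    rwa [show 2 * t + 1 + 1 = 2 * t + 2 by ring] at this)
end
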